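/- Let G be a DAG and X a vertex. X satisfies Condition 1 (namely Ne(X;G) ⊆ Ne(Z;G) ∪ {Z} for every child Z of X) if and only if for all distinct Y, Z ∈ Ne(X;G) and all S ⊆ Mb(X;G) ∖ {Y,Z}, the set S ∪ {X} does not d-separate Y and Z in G. -/
import Mathlib


/-!
Common framework: mixed graphs, paths, colliders, m-separation, MAGs,
removability, Markov boundaries, latent projection, orders.
-/

/-- A mixed graph over a vertex set `verts`, with directed edges `dir` and
bidirected edges `bi`. -/
structure MixedGraph (V : Type*) where
  verts : Set V
  dir : V → V → Prop
  bi : V → V → Prop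
  bi_symm : ∀ {a b : V}, bi a b → bi b a
  dir_mem : ∀ {a b : V}, dir a b → a ∈ verts ∧ b ∈ verts
  bi_mem : ∀ {a b : V}, bi a b → a ∈ verts ∧ b ∈ verts

namespace MixedGraph

variable {V : Type*}

/-- Two vertices are neighbors (adjacent) if joined by a directed or bidirected edge. -/
def adj (G : MixedGraph V) (a b : V) : Prop := G.dir a b ∨ G.dir b a ∨ G.bi a b

/-- `a` is an ancestor of `b` (every vertex is an ancestor of itself). -/
def anc (G : MixedGraph V) (a b : V) : Prop := Relation.ReflTransGen G.dir a b

/-- The set of neighbors of `a`. -/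
def neighbors (G : MixedGraph V) (a : V) : Set V := {b | b ≠ a ∧ G.adj a b}

/-- The set of parents of `a`. -/
def parents (G : MixedGraph V) (a : V) : Set V := {b | G.dir b a}

/-- The set of children of `a`. -/
def children (G : MixedGraph V) (a : V) : Set V := {b | G.dir a b}

/-- Co-parents of `a` (in a DAG): non-neighbors sharing a common child with `a`. -/
def coparents (G : MixedGraph V) (a : V) : Set V :=
  {b | b ≠ a ∧ ¬ G.adj a b ∧ ∃ c, G.dir a c ∧ G.dir b c}

/-- The district of `a`: vertices joined to `a` by a path of bidirected edges
(including `a` itself). -/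
def district (G : MixedGraph V) (a : V) : Set V := {b | Relation.ReflTransGen G.bi b a}

/-- `PaP(a) = Pa(a) ∪ Dis(a) ∪ Pa(Dis(a))`. -/
def paP (G : MixedGraph V) (a : V) : Set V :=
  G.parents a ∪ G.district a ∪ ⋃ b ∈ G.district a, G.parents b

/-- The induced subgraph of `G` over `W`. -/
def induce (G : MixedGraph V) (W : Set V) : MixedGraph V where
  verts := G.verts ∩ W
  dir a b := G.dir a b ∧ a ∈ W ∧ b ∈ W
  bi a b := G.bi a b ∧ a ∈ W ∧ b ∈ W
  bi_symm h := ⟨G.bi_symm h.1, h.2.2, h.2.1⟩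
  dir_mem h := ⟨⟨(G.dir_mem h.1).1, h.2.1⟩, (G.dir_mem h.1).2, h.2.2⟩
  bi_mem h := ⟨⟨(G.bi_mem h.1).1, h.2.1⟩, (G.bi_mem h.1).2, h.2.2⟩

end MixedGraph

/-- Possible orientations of an edge along a path: `fwd` is `a → b`,
`bwd` is `a ← b`, `bidir` is `a ↔ b`. -/
inductive EdgeDir
  | fwd | bwd | bidir

/-- Validity of an orientation mark between consecutive path vertices. -/
def edirValid {V : Type*} (G : MixedGraph V) (a b : V) : EdgeDir → Prop
  | .fwd => G.dir a b
  | .bwd => G.dir b a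
  | .bidir => G.bi a b

/-- The edge has an arrowhead at its second (right) endpoint. -/
def headAt2 (e : EdgeDir) : Prop := e = .fwd ∨ e = .bidir

/-- The edge has an arrowhead at its first (left) endpoint. -/
def headAt1 (e : EdgeDir) : Prop := e = .bwd ∨ e = .bidir

/-- A path in a mixed graph `G` from `x` to `y`: a sequence of distinct vertices
`vert 0, …, vert len` together with an oriented edge of `G` between consecutive
vertices. -/
structure MPath {V : Type*} (G : MixedGraph V) (x y : V) where
  len : ℕ
  len_pos : 0 < len
  vert : ℕ → V
  edir : ℕ → EdgeDir
  first : vert 0 = x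
  last : vert len = y
  mem : ∀ i, i ≤ len → vert i ∈ G.verts
  inj : ∀ i j, i ≤ len → j ≤ len → vert i = vert j → i = j
  valid : ∀ i, i < len → edirValid G (vert i) (vert (i + 1)) (edir i)

namespace MPath

variable {V : Type*} {G : MixedGraph V} {x y : V}

/-- The vertex at interior position `i` (where `0 < i < len`) is a collider on the path:
both incident path edges have an arrowhead at it. -/
def collider (p : MPath G x y) (i : ℕ) : Prop :=
  headAt2 (p.edir (i - 1)) ∧ headAt1 (p.edir i)

/-- The path is blocked by `Z`: some interior vertex is a collider that is not an
ancestor of any vertex of `Z ∪ {x, y}`, or a non-collider belonging to `Z`. -/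
def blocked (p : MPath G x y) (Z : Set V) : Prop :=
  ∃ i, 0 < i ∧ i < p.len ∧
    ((p.collider i ∧ ∀ w ∈ Z ∪ ({x, y} : Set V), ¬ G.anc (p.vert i) w) ∨
     (¬ p.collider i ∧ p.vert i ∈ Z))

/-- A collider path: every interior vertex is a collider on the path. -/
def isColliderPath (p : MPath G x y) : Prop :=
  ∀ i, 0 < i → i < p.len → p.collider i

/-- An inducing path relative to `W2`: every interior non-collider belongs to `W2`,
and every interior collider is an ancestor of `x` or of `y`. -/
def isInducing (p : MPath G x y) (W2 : Set V) : Prop :=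
  ∀ i, 0 < i → i < p.len →
    (p.collider i → G.anc (p.vert i) x ∨ G.anc (p.vert i) y) ∧
    (¬ p.collider i → p.vert i ∈ W2)

end MPath

/-- `Z` m-separates `x` and `y` in `G`: every path between `x` and `y` is blocked by `Z`. -/
def mSep {V : Type*} (G : MixedGraph V) (x y : V) (Z : Set V) : Prop :=
  ∀ p : MPath G x y, p.blocked Z

namespace MixedGraph

variable {V : Type*}

/-- The Markov boundary of `a` in `G`: vertices `b ≠ a` with a collider path to `a`. -/
def mb (G : MixedGraph V) (a : V) : Set V :=
  {b | b ≠ a ∧ ∃ p : MPath G b a, p.isColliderPath}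

/-- `G` is a maximal ancestral graph (MAG): no directed cycles, no almost directed
cycles, and every pair of distinct non-neighbor vertices is m-separated by some set. -/
structure IsMAG (G : MixedGraph V) : Prop where
  no_dir_cycle : ∀ a b, G.dir a b → ¬ G.anc b a
  no_almost_dir_cycle : ∀ a b, G.bi a b → ¬ G.anc b a
  maximal : ∀ a ∈ G.verts, ∀ b ∈ G.verts, a ≠ b → ¬ G.adj a b →
    ∃ Z ⊆ G.verts \ {a, b}, mSep G a b Z

/-- `G` is a DAG: a MAG with no bidirected edges. -/
def IsDAG (G : MixedGraph V) : Prop := G.IsMAG ∧ ∀ a b, ¬ G.bi a b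

/-- `x` is removable in `G`: `G` and the induced subgraph `G[verts ∖ {x}]` impose the
same m-separation relations among the vertices of `verts ∖ {x}`. -/
def Removable (G : MixedGraph V) (x : V) : Prop :=
  ∀ y z, y ∈ G.verts → z ∈ G.verts → y ≠ x → z ≠ x → y ≠ z →
    ∀ Z ⊆ G.verts \ {x, y, z},
      (mSep G y z Z ↔ mSep (G.induce (G.verts \ {x})) y z Z)

/-- There is an inducing path between `a` and `b` in `G` relative to `W2`. -/
def InducingAdj (G : MixedGraph V) (W2 : Set V) (a b : V) : Prop :=
  (∃ p : MPath G a b, p.isInducing W2) ∨ (∃ p : MPath G b a, p.isInducing W2)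

/-- The latent projection of `G` onto `W1`: distinct `a, b ∈ W1` are joined iff there is
an inducing path between them in `G` relative to `G.verts ∖ W1`; the edge is `a → b` if
`a` is an ancestor of `b` in `G` but not conversely, and `a ↔ b` if neither is an
ancestor of the other. -/
def project (G : MixedGraph V) (W1 : Set V) : MixedGraph V where
  verts := W1
  dir a b := a ∈ W1 ∧ b ∈ W1 ∧ a ≠ b ∧ InducingAdj G (G.verts \ W1) a b ∧
    G.anc a b ∧ ¬ G.anc b a
  bi a b := a ∈ W1 ∧ b ∈ W1 ∧ a ≠ b ∧ InducingAdj G (G.verts \ W1) a b ∧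
    ¬ G.anc a b ∧ ¬ G.anc b a
  bi_symm h :=
    ⟨h.2.1, h.1, h.2.2.1.symm, Or.symm h.2.2.2.1, h.2.2.2.2.2, h.2.2.2.2.1⟩
  dir_mem h := ⟨h.1, h.2.1⟩
  bi_mem h := ⟨h.1, h.2.1⟩

/-- Two mixed graphs over the same vertex set impose exactly the same m-separation
relations. -/
def MarkovEquiv (G1 G2 : MixedGraph V) : Prop :=
  ∀ a ∈ G1.verts, ∀ b ∈ G1.verts, a ≠ b → ∀ Z ⊆ G1.verts \ {a, b},
    (mSep G1 a b Z ↔ mSep G2 a b Z)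

/-- A list of vertices is an order over (the vertex set of) `G` if it lists each vertex
exactly once. -/
def IsOrder (G : MixedGraph V) (l : List V) : Prop :=
  l.Nodup ∧ ∀ v, v ∈ l ↔ v ∈ G.verts

/-- An r-order of `G`: an order `(X₁, …, Xₙ)` such that each `Xᵢ` is removable in the
induced subgraph `G[{Xᵢ, …, Xₙ}]`. -/
def IsROrder (G : MixedGraph V) (l : List V) : Prop :=
  IsOrder G l ∧ ∀ (i : ℕ) (h : i < l.length),
    Removable (G.induce {v | v ∈ l.drop i}) (l.get ⟨i, h⟩)

/-- A c-order of a DAG `G`: an order `(X₁, …, Xₙ)` such that each `Xᵢ` has no children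
in the induced subgraph `G[{Xᵢ, …, Xₙ}]`. -/
def IsCOrder (G : MixedGraph V) (l : List V) : Prop :=
  IsOrder G l ∧ ∀ (i : ℕ) (h : i < l.length),
    ∀ v, ¬ (G.induce {v' | v' ∈ l.drop i}).dir (l.get ⟨i, h⟩) v

/-- The maximum in-degree of `G`. -/
noncomputable def deltaIn (G : MixedGraph V) : ℕ :=
  sSup {n | ∃ a ∈ G.verts, n = (G.parents a).ncard}

/-- `Δin⁺(G)`: the maximum of `|PaP(a)|` over the vertices of `G`. -/
noncomputable def deltaInPlus (G : MixedGraph V) : ℕ :=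
  sSup {n | ∃ a ∈ G.verts, n = (G.paP a).ncard}

/-- `G` is diamond-free: it contains no induced subgraph on four vertices `a, b, c, d`
whose skeleton has exactly the edges a–b, a–c, a–d, b–d, c–d (with b, c non-adjacent). -/
def DiamondFree (G : MixedGraph V) : Prop :=
  ¬ ∃ a b c d : V, a ∈ G.verts ∧ b ∈ G.verts ∧ c ∈ G.verts ∧ d ∈ G.verts ∧
    a ≠ b ∧ a ≠ c ∧ a ≠ d ∧ b ≠ c ∧ b ≠ d ∧ c ≠ d ∧
    G.adj a b ∧ G.adj a c ∧ G.adj a d ∧ G.adj b d ∧ G.adj c d ∧ ¬ G.adj b c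

end MixedGraph

/-- The cost of an order `(X₁, …, Xₙ)`: `Σₜ |Ne(Xₜ; G_{Vₜ})|` where `Vₜ = {Xₜ, …, Xₙ}`
and `G_{Vₜ}` is the latent projection of `G` onto `Vₜ` (the term for `t = n` is zero). -/
noncomputable def orderCost {V : Type*} (G : MixedGraph V) : List V → ℕ
  | [] => 0
  | x :: rest => ((G.project {v | v ∈ x :: rest}).neighbors x).ncard + orderCost G rest

/-! ### Auxiliary lemmas for Statement 10 -/

section Stmt10Aux

open Classical

variable {V : Type*} {G : MixedGraph V}

lemma MixedGraph.adj_symm (h : G.adj a b) : G.adj b a := by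
  rcases h with h | h | h
  · exact Or.inr (Or.inl h)
  · exact Or.inl h
  · exact Or.inr (Or.inr (G.bi_symm h))

lemma dag_dir_ne (hG : G.IsDAG) (h : G.dir a b) : a ≠ b := by
  intro heq; subst heq
  exact hG.1.no_dir_cycle a a h Relation.ReflTransGen.refl

lemma dag_anc_antisymm (hG : G.IsDAG) {a b : V} (h1 : G.anc a b) (h2 : G.anc b a) :
    a = b := by
  rcases Relation.ReflTransGen.cases_head h1 with h | ⟨c, hc, hca⟩
  · exact h
  · exact absurd (hca.trans h2) (hG.1.no_dir_cycle a c hc)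

/-- Path consisting of a single edge. -/
noncomputable def onePath (G : MixedGraph V) (a b : V) (hab : a ≠ b)
    (h : G.dir a b ∨ G.dir b a) : MPath G a b where
  len := 1
  len_pos := one_pos
  vert i := if i = 0 then a else b
  edir _ := if G.dir a b then .fwd else .bwd
  first := rfl
  last := rfl
  mem i _ := by
    rcases h with h | h
    · rcases G.dir_mem h with ⟨h1, h2⟩
      by_cases hi : i = 0 <;> simp [hi, h1, h2]
    · rcases G.dir_mem h with ⟨h1, h2⟩
      by_cases hi : i = 0 <;> simp [hi, h1, h2]
  inj i j hi hj hij := by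
    interval_cases i <;> interval_cases j <;> simp_all
  valid i hi := by
    have hi0 : i = 0 := by omega
    subst hi0
    by_cases hd : G.dir a b
    · simp only [if_pos hd]
      simpa [edirValid] using hd
    · simp only [if_neg hd]
      have : G.dir b a := h.resolve_left hd
      simpa [edirValid] using this

lemma onePath_not_blocked {a b : V} (hab : a ≠ b) (h : G.dir a b ∨ G.dir b a)
    (Z : Set V) : ¬ (onePath G a b hab h).blocked Z := by
  rintro ⟨i, h1, h2, -⟩
  have : (onePath G a b hab h).len = 1 := rfl
  omega

lemma onePath_colliderPath {a b : V} (hab : a ≠ b) (h : G.dir a b ∨ G.dir b a) :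
    (onePath G a b hab h).isColliderPath := by
  intro i h1 h2
  have : (onePath G a b hab h).len = 1 := rfl
  omega

/-- Collider path `a → m ← b`. -/
def collPath (G : MixedGraph V) (a m b : V) (ham : G.dir a m) (hbm : G.dir b m)
    (hab : a ≠ b) (h1 : a ≠ m) (h2 : b ≠ m) : MPath G a b where
  len := 2
  len_pos := two_pos
  vert i := if i = 0 then a else if i = 1 then m else b
  edir i := if i = 0 then .fwd else .bwd
  first := rfl
  last := rfl
  mem i _ := by
    by_cases hi : i = 0
    · simp [hi, (G.dir_mem ham).1]
    · by_cases hi' : i = 1 <;> simp [hi, hi', (G.dir_mem ham).2, (G.dir_mem hbm).1]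
  inj i j hi hj hij := by
    interval_cases i <;> interval_cases j <;> simp_all
  valid i hi := by
    interval_cases i
    · simpa [edirValid] using ham
    · simpa [edirValid] using hbm

lemma collPath_len {a m b : V} (ham : G.dir a m) (hbm : G.dir b m)
    (hab : a ≠ b) (h1 : a ≠ m) (h2 : b ≠ m) :
    (collPath G a m b ham hbm hab h1 h2).len = 2 := rfl

lemma collPath_collider {a m b : V} (ham : G.dir a m) (hbm : G.dir b m)
    (hab : a ≠ b) (h1 : a ≠ m) (h2 : b ≠ m) :
    (collPath G a m b ham hbm hab h1 h2).collider 1 :=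
  ⟨Or.inl rfl, Or.inl rfl⟩

lemma collPath_colliderPath {a m b : V} (ham : G.dir a m) (hbm : G.dir b m)
    (hab : a ≠ b) (h1 : a ≠ m) (h2 : b ≠ m) :
    (collPath G a m b ham hbm hab h1 h2).isColliderPath := by
  intro i hi1 hi2
  have : (collPath G a m b ham hbm hab h1 h2).len = 2 := rfl
  have : i = 1 := by omega
  subst this
  exact collPath_collider ham hbm hab h1 h2

/-- A parent `w ≠ x` of a child `c` of `x` is in the Markov boundary of `x`. -/
lemma parent_of_child_mem_mb (hG : G.IsDAG) {x c w : V}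
    (hxc : G.dir x c) (hwc : G.dir w c) (hwx : w ≠ x) : w ∈ G.mb x := by
  refine ⟨hwx, ?_⟩
  by_cases hadj : G.adj x w
  · have h : G.dir w x ∨ G.dir x w := by
      rcases hadj with h | h | h
      · exact Or.inr h
      · exact Or.inl h
      · exact absurd h (hG.2 _ _)
    exact ⟨onePath G w x hwx h, onePath_colliderPath hwx h⟩
  · exact ⟨collPath G w c x hwc hxc hwx (dag_dir_ne hG hwc) (dag_dir_ne hG hxc),
      collPath_colliderPath _ _ _ _ _⟩

/-! ### Path reversal and symmetry of m-separation -/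

/-- Flip an edge orientation. -/
def EdgeDir.flip : EdgeDir → EdgeDir
  | .fwd => .bwd
  | .bwd => .fwd
  | .bidir => .bidir

lemma headAt2_flip (e : EdgeDir) : headAt2 e.flip ↔ headAt1 e := by
  cases e <;> simp [headAt1, headAt2, EdgeDir.flip]

lemma headAt1_flip (e : EdgeDir) : headAt1 e.flip ↔ headAt2 e := by
  cases e <;> simp [headAt1, headAt2, EdgeDir.flip]

lemma edirValid_flip {a b : V} {e : EdgeDir} (h : edirValid G a b e) :
    edirValid G b a e.flip := by
  cases e
  · exact h
  · exact h
  · exact G.bi_symm h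

/-- Reversal of a path. -/
def MPath.reverse {x y : V} (p : MPath G x y) : MPath G y x where
  len := p.len
  len_pos := p.len_pos
  vert i := p.vert (p.len - i)
  edir i := (p.edir (p.len - 1 - i)).flip
  first := by simpa using p.last
  last := by simpa using p.first
  mem i _ := p.mem _ (by omega)
  inj i j hi hj h := by
    have := p.inj _ _ (Nat.sub_le _ _) (Nat.sub_le _ _) h
    omega
  valid i hi := by
    have hv := p.valid (p.len - 1 - i) (by omega)
    have h1 : p.len - (i + 1) = p.len - 1 - i := by omega
    have h2 : p.len - i = (p.len - 1 - i) + 1 := by omega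
    show edirValid G (p.vert (p.len - i)) (p.vert (p.len - (i + 1)))
      ((p.edir (p.len - 1 - i)).flip)
    rw [h1, h2]
    exact edirValid_flip hv

lemma reverse_collider {x y : V} (p : MPath G x y) {i : ℕ} (h0 : 0 < i)
    (h1 : i < p.len) :
    p.reverse.collider i ↔ p.collider (p.len - i) := by
  have e1 : p.reverse.edir (i - 1) = (p.edir (p.len - i)).flip := by
    show (p.edir (p.len - 1 - (i - 1))).flip = _
    congr 2
    omega
  have e2 : p.reverse.edir i = (p.edir (p.len - i - 1)).flip := by
    show (p.edir (p.len - 1 - i)).flip = _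
    congr 2
    omega
  rw [MPath.collider, MPath.collider, e1, e2, headAt2_flip, headAt1_flip]
  exact And.comm

lemma mSep_symm {x y : V} {Z : Set V} (h : mSep G x y Z) : mSep G y x Z := by
  intro q
  obtain ⟨i, h0, h1, hb⟩ := h q.reverse
  have hlen : q.reverse.len = q.len := rfl
  rw [hlen] at h1
  refine ⟨q.len - i, by omega, by omega, ?_⟩
  have hv : q.reverse.vert i = q.vert (q.len - i) := rfl
  have hcoll := reverse_collider q h0 h1
  have hpair : ({x, y} : Set V) = {y, x} := Set.pair_comm x y
  rcases hb with ⟨hc, hanc⟩ | ⟨hnc, hm⟩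
  · left
    refine ⟨hcoll.mp hc, ?_⟩
    intro w hw
    have : w ∈ Z ∪ ({x, y} : Set V) := by rwa [hpair]
    exact hanc w this
  · right
    exact ⟨fun hc => hnc (hcoll.mpr hc), hm⟩

/-- **Local Markov blocking lemma**: if `y` and `z` are non-adjacent and `z` is not
an ancestor of `y`, then `Pa(z)` d-separates `y` and `z`. -/
lemma sep_parents (hG : G.IsDAG) {y z : V} (hadj : ¬ G.adj y z)
    (hanc : ¬ G.anc z y) : mSep G y z (G.parents z) := by
  intro p
  have hpos := p.len_pos
  have hn1 : p.len - 1 < p.len := by omega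
  have hv := p.valid (p.len - 1) hn1
  have hsucc : p.len - 1 + 1 = p.len := by omega
  rcases he : p.edir (p.len - 1) with _ | _ | _
  · -- last edge is `→ z`
    rw [he] at hv
    have hdir : G.dir (p.vert (p.len - 1)) z := by
      rw [hsucc, p.last] at hv; exact hv
    by_cases h1 : p.len = 1
    · exfalso
      apply hadj
      have : p.vert (p.len - 1) = y := by rw [h1]; exact p.first
      rw [this] at hdir
      exact Or.inl hdir
    · refine ⟨p.len - 1, by omega, hn1, Or.inr ⟨?_, hdir⟩⟩
      rintro ⟨-, hh⟩
      rw [he] at hh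
      rcases hh with hh | hh <;> simp at hh
  · -- last edge is `z →`
    rw [he] at hv
    have hdirz : G.dir z (p.vert (p.len - 1)) := by
      rw [hsucc, p.last] at hv; exact hv
    classical
    have hPn1 : ∀ k, p.len - 1 ≤ k → k < p.len → p.edir k = .bwd := by
      intro k hk1 hk2
      have : k = p.len - 1 := by omega
      rw [this, he]
    have hPex : ∃ i, ∀ k, i ≤ k → k < p.len → p.edir k = .bwd := ⟨p.len - 1, hPn1⟩
    set i := Nat.find hPex with hidef
    have hi : ∀ k, i ≤ k → k < p.len → p.edir k = .bwd := Nat.find_spec hPex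
    have hdirs : ∀ k, i ≤ k → k < p.len → G.dir (p.vert (k + 1)) (p.vert k) := by
      intro k h1 h2
      have hvk := p.valid k h2
      rw [hi k h1 h2] at hvk
      exact hvk
    have hchain : ∀ d j, j + d = p.len → i ≤ j → G.anc z (p.vert j) := by
      intro d
      induction d with
      | zero =>
        intro j hj _
        have : j = p.len := by omega
        rw [this, p.last]
        exact Relation.ReflTransGen.refl
      | succ d ih =>
        intro j hj hij
        exact (ih (j + 1) (by omega) (by omega)).tail (hdirs j hij (by omega))
    have hi0 : 0 < i := by
      rcases Nat.eq_zero_or_pos i with h0 | h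
      · exfalso
        apply hanc
        have := hchain p.len 0 (by omega) (by omega)
        rwa [p.first] at this
      · exact h
    have hilt : i < p.len := by
      have : i ≤ p.len - 1 := Nat.find_min' hPex hPn1
      omega
    have hfprev : p.edir (i - 1) = .fwd := by
      have hmin := Nat.find_min hPex (m := i - 1) (by omega)
      push_neg at hmin
      obtain ⟨k, hk1, hk2, hk3⟩ := hmin
      have hk : k = i - 1 := by
        by_contra hne
        exact hk3 (hi k (by omega) hk2)
      rw [← hk]
      have hvk := p.valid k hk2
      rcases hek : p.edir k with _ | _ | _
      · rfl
      · exact absurd hek hk3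
      · rw [hek] at hvk
        exact absurd hvk (hG.2 _ _)
    have hcol : p.collider i := by
      constructor
      · rw [hfprev]; exact Or.inl rfl
      · rw [hi i le_rfl hilt]; exact Or.inl rfl
    have hanczi : G.anc z (p.vert i) := hchain (p.len - i) i (by omega) le_rfl
    refine ⟨i, hi0, hilt, Or.inl ⟨hcol, ?_⟩⟩
    intro w hw hancw
    have key : ¬ G.anc (p.vert i) z := by
      intro h
      have heq : p.vert i = z := dag_anc_antisymm hG h hanczi
      have := p.inj i p.len (le_of_lt hilt) le_rfl (by rw [heq, p.last])
      omega
    rcases hw with hw | hw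
    · exact key (hancw.tail hw)
    · rcases hw with hw | hw
      · rw [hw] at hancw
        exact hanc (hanczi.trans hancw)
      · rw [Set.mem_singleton_iff] at hw
        rw [hw] at hancw
        exact key hancw
  · rw [he] at hv
    exact absurd hv (hG.2 _ _)

end Stmt10Aux


/-- In a DAG `G`, a vertex `X` satisfies Condition 1
(`Ne(X) ⊆ Ne(Z) ∪ {Z}` for every child `Z` of `X`) iff for all distinct
`Y, Z ∈ Ne(X)` and all `S ⊆ Mb(X) ∖ {Y, Z}`, the set `S ∪ {X}` does not d-separate
`Y` and `Z` in `G`. -/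
theorem stmt_10 {V : Type*} [Fintype V] (G : MixedGraph V) (hG : G.IsDAG)
    (x : V) (hx : x ∈ G.verts) :
    (∀ z ∈ G.children x, G.neighbors x ⊆ G.neighbors z ∪ {z}) ↔
      (∀ y ∈ G.neighbors x, ∀ z ∈ G.neighbors x, y ≠ z →
        ∀ S ⊆ G.mb x \ {y, z}, ¬ mSep G y z (S ∪ {x})) := by
  constructor
  · -- Condition 1 implies no separation
    intro hcond y hy z hz hyz S hS hsep
    obtain ⟨hyx, hadjxy⟩ := hy
    obtain ⟨hzx, hadjxz⟩ := hz
    by_cases hadj : G.adj y z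
    · -- adjacent: single edge path cannot be blocked
      have h : G.dir y z ∨ G.dir z y := by
        rcases hadj with h | h | h
        · exact Or.inl h
        · exact Or.inr h
        · exact absurd h (hG.2 _ _)
      exact onePath_not_blocked hyz h _ (hsep (onePath G y z hyz h))
    · -- non-adjacent: Condition 1 forces `y → x ← z`, an unblockable path
      have hyx' : G.dir y x := by
        rcases hadjxy with h | h | h
        · exfalso
          have := hcond y h ⟨hzx, hadjxz⟩
          rcases this with h' | h'
          · exact hadj h'.2
          · exact hyz (Set.mem_singleton_iff.mp h').symm
        · exact h
        · exact absurd h (hG.2 _ _)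
      have hzx' : G.dir z x := by
        rcases hadjxz with h | h | h
        · exfalso
          have := hcond z h ⟨hyx, hadjxy⟩
          rcases this with h' | h'
          · exact hadj (MixedGraph.adj_symm h'.2)
          · exact hyz (Set.mem_singleton_iff.mp h')
        · exact h
        · exact absurd h (hG.2 _ _)
      set p := collPath G y x z hyx' hzx' hyz hyx hzx with hp
      obtain ⟨i, h0, h1, hb⟩ := hsep p
      have hlen : p.len = 2 := rfl
      have hi1 : i = 1 := by omega
      subst hi1
      have hcol : p.collider 1 := collPath_collider hyx' hzx' hyz hyx hzx
      rcases hb with ⟨-, hanc⟩ | ⟨hnc, -⟩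
      · have hxmem : x ∈ (S ∪ {x}) ∪ ({y, z} : Set V) :=
          Or.inl (Or.inr rfl)
        have hvert : p.vert 1 = x := rfl
        exact hanc x hxmem (by rw [hvert]; exact Relation.ReflTransGen.refl)
      · exact hnc hcol
  · -- No-separation criterion implies Condition 1
    intro h z hz y hy
    by_contra hny
    have hxz : G.dir x z := hz
    obtain ⟨hyx, hadjxy⟩ := hy
    have hzx : z ≠ x := (dag_dir_ne hG hxz).symm
    have hzne : z ∈ G.neighbors x := ⟨hzx, Or.inl hxz⟩
    have hyne : y ∈ G.neighbors x := ⟨hyx, hadjxy⟩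
    rw [Set.mem_union] at hny
    push_neg at hny
    obtain ⟨hny1, hny2⟩ := hny
    rw [Set.mem_singleton_iff] at hny2
    have hyz : y ≠ z := hny2
    have hadjzy : ¬ G.adj z y := fun hh => hny1 ⟨hny2, hh⟩
    have hadjyz : ¬ G.adj y z := fun hh => hadjzy (MixedGraph.adj_symm hh)
    by_cases hanczy : G.anc z y
    · -- y is a descendant of z: separate with Pa(y)
      have hxy : G.dir x y := by
        rcases hadjxy with hh | hh | hh
        · exact hh
        · exact absurd (hanczy.tail hh) (hG.1.no_dir_cycle x z hxz)
        · exact absurd hh (hG.2 _ _)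
      have hancyz : ¬ G.anc y z := fun hh =>
        hyz (dag_anc_antisymm hG hh hanczy)
      have hsep : mSep G y z (G.parents y) :=
        mSep_symm (sep_parents hG hadjzy hancyz)
      have hxpa : x ∈ G.parents y := hxy
      have hunion : (G.parents y \ {x}) ∪ {x} = G.parents y := by
        ext w
        simp only [Set.mem_union, Set.mem_diff, Set.mem_singleton_iff]
        constructor
        · rintro (⟨hw, -⟩ | rfl)
          · exact hw
          · exact hxpa
        · intro hw
          by_cases hwx : w = x
          · exact Or.inr hwx
          · exact Or.inl ⟨hw, hwx⟩
      refine h y hyne z hzne hyz (G.parents y \ {x}) ?_ ?_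
      · intro w hw
        obtain ⟨hwy, hwx⟩ := hw
        refine ⟨parent_of_child_mem_mb hG hxy hwy hwx, ?_⟩
        simp only [Set.mem_insert_iff, Set.mem_singleton_iff]
        push_neg
        constructor
        · exact dag_dir_ne hG hwy
        · intro hwz
          rw [hwz] at hwy
          exact hadjzy (Or.inl hwy)
      · rw [hunion]
        exact hsep
    · -- y is not a descendant of z: separate with Pa(z)
      have hsep : mSep G y z (G.parents z) := sep_parents hG hadjyz hanczy
      have hxpa : x ∈ G.parents z := hxz
      have hunion : (G.parents z \ {x}) ∪ {x} = G.parents z := by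
        ext w
        simp only [Set.mem_union, Set.mem_diff, Set.mem_singleton_iff]
        constructor
        · rintro (⟨hw, -⟩ | rfl)
          · exact hw
          · exact hxpa
        · intro hw
          by_cases hwx : w = x
          · exact Or.inr hwx
          · exact Or.inl ⟨hw, hwx⟩
      refine h y hyne z hzne hyz (G.parents z \ {x}) ?_ ?_
      · intro w hw
        obtain ⟨hwz, hwx⟩ := hw
        refine ⟨parent_of_child_mem_mb hG hxz hwz hwx, ?_⟩
        simp only [Set.mem_insert_iff, Set.mem_singleton_iff]
        push_neg
        constructor
        · intro hwy
          rw [hwy] at hwz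
          exact hadjyz (Or.inl hwz)
        · exact dag_dir_ne hG hwz
      · rw [hunion]
        exact hsep
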